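/- arXiv:1905.08322 — 2 statements merged into one kernel-verified Lean document; each statement's English description precedes it below -/
import Mathlib

section
/- Relaxation lower bound: For every ρ ∈ ℝ^L with 0 ≤ ρ_p ≤ 1 for all p, the optimal value of the primal 2-marginal SDP is a lower bound for the multi-marginal optimal transport value: E_sdp[ρ] ≤ E_sce[ρ]. -/
/-!
Every `μ ∈ Π(ρ)` gives an SDP-feasible point with the same cost: its second-moment matrix
`M = ∑ₛ μ(s) vₛ vₛᵀ`, where `vₛ ∈ {0,1}^{2L}` is the one-hot encoding of `s`, is positive
semidefinite, has the 2-marginals of `μ` as blocks, and `Tr(CM)` is the cost of `μ` because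
`C` vanishes on diagonal blocks. Hence the SDP values contain the MMOT values. For the
comparison of infima one also needs that `Π(ρ)` is nonempty (it contains the product measure)
and that the SDP values are bounded below (feasible `M` have entries in `[0, 1]`).
-/
open Matrix BigOperators

noncomputable section

abbrev Idx (L : ℕ) := Fin L × Fin 2

/-- The fixed 1-marginal `μ_p^(1) = (1 - ρ_p, ρ_p)ᵀ`. -/
def mu1 {L : ℕ} (ρ : Fin L → ℝ) (p : Fin L) (t : Fin 2) : ℝ :=
  if t = 0 then 1 - ρ p else ρ p

/-- The 1-marginal of a (signed) measure `μ` on `{0,1}^L`. -/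
def marg1 {L : ℕ} (μ : (Fin L → Fin 2) → ℝ) (p : Fin L) (t : Fin 2) : ℝ :=
  ∑ s : Fin L → Fin 2, if s p = t then μ s else 0

/-- The 2-marginal of a (signed) measure `μ` on `{0,1}^L`. -/
def marg2 {L : ℕ} (μ : (Fin L → Fin 2) → ℝ) (p q : Fin L) (t u : Fin 2) : ℝ :=
  ∑ s : Fin L → Fin 2, if s p = t ∧ s q = u then μ s else 0

/-- `μ ∈ Π(ρ)` : probability measure on `{0,1}^L` with 1-marginals `(1-ρ_p, ρ_p)ᵀ`. -/
def InPi {L : ℕ} (ρ : Fin L → ℝ) (μ : (Fin L → Fin 2) → ℝ) : Prop :=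
  (∀ s, 0 ≤ μ s) ∧ (∑ s : Fin L → Fin 2, μ s = 1) ∧
  (∀ p t, marg1 μ p t = mu1 ρ p t)

/-- The MMOT cost of `μ`, written in terms of its 2-marginals. -/
def sceCost {L : ℕ} (C : Matrix (Idx L) (Idx L) ℝ) (μ : (Fin L → Fin 2) → ℝ) : ℝ :=
  ∑ p : Fin L, ∑ q : Fin L,
    if p ≠ q then ∑ t : Fin 2, ∑ u : Fin 2, C (p, t) (q, u) * marg2 μ p q t u else 0

/-- Set of MMOT cost values over `Π(ρ)`; `E_sce[ρ]` is its infimum. -/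
def sceValues {L : ℕ} (ρ : Fin L → ℝ) (C : Matrix (Idx L) (Idx L) ℝ) : Set ℝ :=
  {x | ∃ μ : (Fin L → Fin 2) → ℝ, InPi ρ μ ∧ x = sceCost C μ}

/-- Feasibility for the primal 2-marginal SDP. -/
def PrimalFeasible {L : ℕ} (ρ : Fin L → ℝ) (M : Matrix (Idx L) (Idx L) ℝ) : Prop :=
  M.PosSemidef ∧
  (∀ p q : Fin L, p ≠ q → ∀ t u : Fin 2, 0 ≤ M (p, t) (q, u)) ∧
  (∀ p q : Fin L, p ≠ q → ∀ t : Fin 2, ∑ u : Fin 2, M (p, t) (q, u) = mu1 ρ p t) ∧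
  (∀ p : Fin L, ∀ t u : Fin 2, M (p, t) (p, u) = if t = u then mu1 ρ p t else 0)

/-- Set of objective values attained by primal feasible points; `E_sdp[ρ]` is its infimum. -/
def primalValues {L : ℕ} (ρ : Fin L → ℝ) (C : Matrix (Idx L) (Idx L) ℝ) : Set ℝ :=
  {x | ∃ M : Matrix (Idx L) (Idx L) ℝ, PrimalFeasible ρ M ∧ x = Matrix.trace (C * M)}

variable {L : ℕ}

lemma mu1_nonneg {ρ : Fin L → ℝ} {p : Fin L} (hρ : ρ p ∈ Set.Icc 0 1) (t : Fin 2) :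
    0 ≤ mu1 ρ p t := by
  unfold mu1; split <;> linarith [hρ.1, hρ.2]

lemma mu1_le_one {ρ : Fin L → ℝ} {p : Fin L} (hρ : ρ p ∈ Set.Icc 0 1) (t : Fin 2) :
    mu1 ρ p t ≤ 1 := by
  unfold mu1; split <;> linarith [hρ.1, hρ.2]

lemma sum_mu1 (ρ : Fin L → ℝ) (p : Fin L) : ∑ t : Fin 2, mu1 ρ p t = 1 := by
  simp [Fin.sum_univ_two, mu1]

lemma marg2_comm (μ : (Fin L → Fin 2) → ℝ) (p q : Fin L) (t u : Fin 2) :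
    marg2 μ q p u t = marg2 μ p q t u :=
  Finset.sum_congr rfl fun _ _ => if_congr and_comm rfl rfl

lemma marg2_nonneg {μ : (Fin L → Fin 2) → ℝ} (hμ : ∀ s, 0 ≤ μ s) (p q : Fin L) (t u : Fin 2) :
    0 ≤ marg2 μ p q t u :=
  Finset.sum_nonneg fun s _ => by split <;> simp [hμ s]

lemma sum_marg2_right (μ : (Fin L → Fin 2) → ℝ) (p q : Fin L) (t : Fin 2) :
    ∑ u : Fin 2, marg2 μ p q t u = marg1 μ p t := by
  unfold marg2 marg1
  rw [Finset.sum_comm]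
  refine Finset.sum_congr rfl fun s _ => ?_
  by_cases h : s p = t <;> simp [h]

lemma marg2_self (μ : (Fin L → Fin 2) → ℝ) (p : Fin L) (t u : Fin 2) :
    marg2 μ p p t u = if t = u then marg1 μ p t else 0 := by
  unfold marg2 marg1
  split_ifs with htu
  · simp [htu]
  · exact Finset.sum_eq_zero fun s _ => if_neg fun h => htu (h.1.symm.trans h.2)

def oneHot (s : Fin L → Fin 2) (i : Idx L) : ℝ :=
  if s i.1 = i.2 then 1 else 0

def momentMatrix (μ : (Fin L → Fin 2) → ℝ) : Matrix (Idx L) (Idx L) ℝ :=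
  ∑ s, μ s • vecMulVec (oneHot s) (oneHot s)

lemma momentMatrix_apply (μ : (Fin L → Fin 2) → ℝ) (p q : Fin L) (t u : Fin 2) :
    momentMatrix μ (p, t) (q, u) = marg2 μ p q t u := by
  simp only [momentMatrix, Matrix.sum_apply, Matrix.smul_apply, vecMulVec_apply, oneHot,
    marg2, smul_eq_mul]
  refine Finset.sum_congr rfl fun s _ => ?_
  by_cases h1 : s p = t <;> by_cases h2 : s q = u <;> simp [h1, h2]

lemma posSemidef_momentMatrix {μ : (Fin L → Fin 2) → ℝ} (hμ : ∀ s, 0 ≤ μ s) :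
    (momentMatrix μ).PosSemidef :=
  posSemidef_sum _ fun s _ => (posSemidef_vecMulVec_self_star (oneHot s)).smul (hμ s)

lemma primalFeasible_momentMatrix {ρ : Fin L → ℝ} {μ : (Fin L → Fin 2) → ℝ} (hμ : InPi ρ μ) :
    PrimalFeasible ρ (momentMatrix μ) := by
  obtain ⟨hnonneg, -, hmarg⟩ := hμ
  refine ⟨posSemidef_momentMatrix hnonneg, fun p q _ t u => ?_, fun p q _ t => ?_,
    fun p t u => ?_⟩
  · rw [momentMatrix_apply]; exact marg2_nonneg hnonneg p q t u
  · simp only [momentMatrix_apply, sum_marg2_right, hmarg]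
  · rw [momentMatrix_apply, marg2_self, hmarg]

lemma trace_mul_eq_sum {n : Type*} [Fintype n] (C M : Matrix n n ℝ) :
    trace (C * M) = ∑ i, ∑ j, C i j * M j i := by
  simp [trace, mul_apply]

lemma trace_mul_momentMatrix {C : Matrix (Idx L) (Idx L) ℝ}
    (hCdiag : ∀ p : Fin L, ∀ t u : Fin 2, C (p, t) (p, u) = 0) (μ : (Fin L → Fin 2) → ℝ) :
    trace (C * momentMatrix μ) = sceCost C μ := by
  rw [trace_mul_eq_sum, sceCost, Fintype.sum_prod_type]
  refine Finset.sum_congr rfl fun p _ => ?_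
  simp only [Fintype.sum_prod_type, momentMatrix_apply, marg2_comm]
  rw [Finset.sum_comm]
  refine Finset.sum_congr rfl fun q _ => ?_
  split_ifs with hpq
  · rfl
  · obtain rfl : p = q := not_not.mp hpq
    simp [hCdiag]

lemma marg1_prod (w : Fin L → Fin 2 → ℝ) (hw : ∀ q, ∑ u, w q u = 1) (p : Fin L) (t : Fin 2) :
    marg1 (fun s => ∏ q, w q (s q)) p t = w p t := by
  classical
  -- Killing the factors `w p u` with `u ≠ t` absorbs the constraint `s p = t`, so the sum factorises.
  set w' : Fin L → Fin 2 → ℝ := fun q u => if q = p ∧ u ≠ t then 0 else w q u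
  have hrestrict : marg1 (fun s => ∏ q, w q (s q)) p t = ∑ s : Fin L → Fin 2, ∏ q, w' q (s q) := by
    refine Finset.sum_congr rfl fun s _ => ?_
    split_ifs with hs
    · exact Finset.prod_congr rfl fun q _ => (if_neg fun h => h.2 (h.1 ▸ hs)).symm
    · exact (Finset.prod_eq_zero (Finset.mem_univ p) (by simp [w', hs])).symm
  rw [hrestrict, ← Fintype.prod_sum, Finset.prod_eq_single p]
  · simp [w']
  · intro q _ hq
    simp only [w', hq, false_and, if_false, hw]
  · simp

lemma prod_mu1_inPi {ρ : Fin L → ℝ} (hρ : ∀ p, ρ p ∈ Set.Icc 0 1) :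
    InPi ρ (fun s => ∏ p, mu1 ρ p (s p)) := by
  classical
  refine ⟨fun s => Finset.prod_nonneg fun p _ => mu1_nonneg (hρ p) (s p), ?_,
    marg1_prod _ (sum_mu1 ρ)⟩
  rw [← Fintype.prod_sum]
  exact Finset.prod_eq_one fun p _ => sum_mu1 ρ p

lemma neg_sum_abs_le_trace_mul {n : Type*} [Fintype n] (C : Matrix n n ℝ) {M : Matrix n n ℝ}
    (hM : ∀ i j, M i j ∈ Set.Icc 0 1) : -∑ i, ∑ j, |C i j| ≤ trace (C * M) := by
  rw [trace_mul_eq_sum, ← Finset.sum_neg_distrib]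
  refine Finset.sum_le_sum fun i _ => ?_
  rw [← Finset.sum_neg_distrib]
  refine Finset.sum_le_sum fun j _ => ?_
  calc -|C i j| ≤ -|C i j * M j i| := by
        rw [abs_mul, abs_of_nonneg (hM j i).1]
        exact neg_le_neg (mul_le_of_le_one_right (abs_nonneg _) (hM j i).2)
    _ ≤ C i j * M j i := neg_abs_le _

lemma PrimalFeasible.apply_mem_Icc {ρ : Fin L → ℝ} (hρ : ∀ p, ρ p ∈ Set.Icc 0 1)
    {M : Matrix (Idx L) (Idx L) ℝ} (hM : PrimalFeasible ρ M) (i j : Idx L) :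
    M i j ∈ Set.Icc 0 1 := by
  obtain ⟨-, hnonneg, hrow, hdiag⟩ := hM
  obtain ⟨p, t⟩ := i
  obtain ⟨q, u⟩ := j
  by_cases hpq : p = q
  · subst hpq
    rw [hdiag]
    split_ifs
    · exact ⟨mu1_nonneg (hρ p) t, mu1_le_one (hρ p) t⟩
    · exact ⟨le_rfl, zero_le_one⟩
  · refine ⟨hnonneg p q hpq t u, ?_⟩
    calc M (p, t) (q, u) ≤ ∑ u', M (p, t) (q, u') :=
          Finset.single_le_sum (fun u' _ => hnonneg p q hpq t u') (Finset.mem_univ u)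
      _ = mu1 ρ p t := hrow p q hpq t
      _ ≤ 1 := mu1_le_one (hρ p) t

theorem sdp_lower_bound_general (L : ℕ) (ρ : Fin L → ℝ)
    (hρ : ∀ p, 0 ≤ ρ p ∧ ρ p ≤ 1)
    (C : Matrix (Idx L) (Idx L) ℝ)
    (hCdiag : ∀ p : Fin L, ∀ t u : Fin 2, C (p, t) (p, u) = 0) :
    sInf (primalValues ρ C) ≤ sInf (sceValues ρ C) := by
  have hsub : sceValues ρ C ⊆ primalValues ρ C := by
    rintro _ ⟨μ, hμ, rfl⟩
    exact ⟨momentMatrix μ, primalFeasible_momentMatrix hμ, (trace_mul_momentMatrix hCdiag μ).symm⟩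
  have hne : (sceValues ρ C).Nonempty := ⟨_, _, prod_mu1_inPi hρ, rfl⟩
  have hbdd : BddBelow (primalValues ρ C) := by
    refine ⟨-∑ i, ∑ j, |C i j|, ?_⟩
    rintro _ ⟨M, hM, rfl⟩
    exact neg_sum_abs_le_trace_mul C (hM.apply_mem_Icc hρ)
  exact csInf_le_csInf hbdd hne hsub

/-- Relaxation lower bound: `E_sdp[ρ] ≤ E_sce[ρ]`. -/
theorem sdp_lower_bound (L : ℕ) (hL : 2 ≤ L) (ρ : Fin L → ℝ)
    (hρ : ∀ p, 0 ≤ ρ p ∧ ρ p ≤ 1)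
    (C : Matrix (Idx L) (Idx L) ℝ) (hCsymm : C.IsSymm)
    (hCdiag : ∀ p : Fin L, ∀ t u : Fin 2, C (p, t) (p, u) = 0) :
    sInf (primalValues ρ C) ≤ sInf (sceValues ρ C) :=
  sdp_lower_bound_general L ρ hρ C hCdiag
end
end

section
/- Factorization and definiteness of the product-marginal matrix: Let M̄ ∈ ℝ^{2L×2L} be the block matrix with M̄_pp = diag(μ_p^(1)) and M̄_pq = μ_p^(1) (μ_q^(1))ᵀ for p ≠ q, where μ_p^(1) = (1−ρ_p, ρ_p)ᵀ. Let Q ∈ ℝ^{2L×(L+1)} be as defined (columns w₁ = ½(1,−1)ᵀ placed blockwise, last column with all 2-blocks equal to ½(1,1)ᵀ), set ρ̃_p := 1 − 2ρ_p, u := (ρ̃_1,…,ρ̃_L, 1)ᵀ ∈ ℝ^{L+1}, and M̃ := u uᵀ + diag(1−ρ̃_1², …, 1−ρ̃_L², 0) ∈ ℝ^{(L+1)×(L+1)}. Then M̄ = Q M̃ Qᵀ, and if 0 < ρ_p < 1 for all p, then M̃ is positive definite. -/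
/-!
With `ρ̃_p = 1 - 2ρ_p` one has `μ_p^(1) = ½(1,1)ᵀ + ρ̃_p · ½(1,-1)ᵀ`, so the stacked marginal
`μ = (μ_1^(1), …, μ_L^(1))` is `Q u`. Hence the rank-one part `μμᵀ` of `M̄` is `Q u uᵀ Qᵀ`, while the
correction on the diagonal blocks, `diag μ_p - μ_p μ_pᵀ = ρ_p(1-ρ_p) (1,-1)ᵀ(1,-1)`, is
`Q diag(1-ρ̃²,0) Qᵀ` because `1 - ρ̃_p² = 4ρ_p(1-ρ_p)`.

For definiteness, `xᵀ M̃ x = (u ⬝ x)² + ∑_p (1-ρ̃_p²) x_p²`. When `0 < ρ_p < 1` the weights are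
positive, so vanishing forces `x_p = 0` for `p ≤ L`, and then `u_{L+1} = 1` forces `x_{L+1} = 0`.
-/

open Matrix BigOperators

noncomputable section

/-- The product-marginal matrix `M̄` with blocks `M̄_pp = diag(μ_p^(1))` and
`M̄_pq = μ_p^(1) (μ_q^(1))ᵀ` for `p ≠ q`. -/
def Mbar {L : ℕ} (ρ : Fin L → ℝ) : Matrix (Idx L) (Idx L) ℝ :=
  fun a b =>
    if a.1 = b.1 then (if a.2 = b.2 then mu1 ρ a.1 a.2 else 0)
    else mu1 ρ a.1 a.2 * mu1 ρ b.1 b.2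

/-- The matrix `Q ∈ ℝ^{2L×(L+1)}` whose `p`-th column (`p = 1,…,L`) has `p`-th
2-block `½(1,−1)ᵀ` and zero blocks otherwise, and whose `(L+1)`-st column has every
2-block equal to `½(1,1)ᵀ`. -/
def Qmat (L : ℕ) : Matrix (Idx L) (Fin (L + 1)) ℝ :=
  fun a j =>
    if (j : ℕ) = (a.1 : ℕ) then (if a.2 = 0 then 1 / 2 else -(1 / 2))
    else if (j : ℕ) = L then 1 / 2 else 0

/-- `M̃ = u uᵀ + diag(1−ρ̃_1²,…,1−ρ̃_L²,0)` with `u = (ρ̃_1,…,ρ̃_L,1)ᵀ`,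
`ρ̃_p = 1 − 2ρ_p`. -/
def Mtilde {L : ℕ} (ρ : Fin L → ℝ) : Matrix (Fin (L + 1)) (Fin (L + 1)) ℝ :=
  fun i j =>
    (if h : (i : ℕ) < L then 1 - 2 * ρ ⟨i, h⟩ else 1) *
      (if h : (j : ℕ) < L then 1 - 2 * ρ ⟨j, h⟩ else 1) +
    (if i = j then (if h : (i : ℕ) < L then 1 - (1 - 2 * ρ ⟨i, h⟩) ^ 2 else 0) else 0)

namespace Matrix

variable {n : Type*} [Fintype n] [DecidableEq n]

theorem dotProduct_vecMulVec_add_diagonal_mulVec (u d x : n → ℝ) :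
    x ⬝ᵥ (vecMulVec u u + diagonal d) *ᵥ x = (u ⬝ᵥ x) ^ 2 + ∑ i, d i * x i ^ 2 := by
  rw [add_mulVec, dotProduct_add, dotProduct_mulVec, vecMul_vecMulVec, smul_dotProduct,
    dotProduct_comm x u, smul_eq_mul, sq]
  simp only [dotProduct, mulVec_diagonal]
  congr 1
  exact Finset.sum_congr rfl fun i _ => by ring

theorem posDef_vecMulVec_add_diagonal {u d : n → ℝ} (i₀ : n) (hu : u i₀ ≠ 0)
    (hd₀ : 0 ≤ d i₀) (hd : ∀ i ≠ i₀, 0 < d i) : (vecMulVec u u + diagonal d).PosDef := by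
  have hdnn : ∀ i, 0 ≤ d i := fun i => by
    rcases eq_or_ne i i₀ with rfl | hi
    exacts [hd₀, (hd i hi).le]
  have hsq : ∀ x : n → ℝ, 0 ≤ ∑ i, d i * x i ^ 2 := fun x =>
    Finset.sum_nonneg fun i _ => mul_nonneg (hdnn i) (sq_nonneg _)
  refine posDef_iff_dotProduct_mulVec.2 ⟨?_, fun x hx => ?_⟩
  · simpa using (posSemidef_vecMulVec_self_star u).isHermitian.add (isHermitian_diagonal d)
  rw [star_trivial, dotProduct_vecMulVec_add_diagonal_mulVec]
  by_cases hoff : ∃ i ≠ i₀, x i ≠ 0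
  · obtain ⟨i, hi, hxi⟩ := hoff
    have : 0 < ∑ i, d i * x i ^ 2 :=
      Finset.sum_pos' (fun j _ => mul_nonneg (hdnn j) (sq_nonneg _))
        ⟨i, Finset.mem_univ _, mul_pos (hd i hi) (sq_pos_of_ne_zero hxi)⟩
    positivity
  · push Not at hoff
    have hx₀ : x = Pi.single i₀ (x i₀) := by
      ext i
      rcases eq_or_ne i i₀ with rfl | hi
      · simp
      · simp [hi, hoff i hi]
    have hxi₀ : x i₀ ≠ 0 := fun h => hx (by rw [hx₀, h, Pi.single_zero])
    have : 0 < (u ⬝ᵥ x) ^ 2 := by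
      rw [hx₀, dotProduct_single]
      exact sq_pos_of_ne_zero (mul_ne_zero hu hxi₀)
    linarith [hsq x]

end Matrix

def halfSign (s : Fin 2) : ℝ := if s = 0 then 1 / 2 else -(1 / 2)

-- Same `dite` as in `Mtilde`, so that `Mtilde_eq_vecMulVec_add_diagonal` holds by `rfl`.
def uvec {L : ℕ} (ρ : Fin L → ℝ) (i : Fin (L + 1)) : ℝ :=
  if h : (i : ℕ) < L then 1 - 2 * ρ ⟨i, h⟩ else 1

def dvec {L : ℕ} (ρ : Fin L → ℝ) (i : Fin (L + 1)) : ℝ :=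
  if h : (i : ℕ) < L then 1 - (1 - 2 * ρ ⟨i, h⟩) ^ 2 else 0

section

variable {L : ℕ} (ρ : Fin L → ℝ)

theorem Qmat_row (p : Fin L) (s : Fin 2) :
    Qmat L (p, s) = Pi.single p.castSucc (halfSign s) + Pi.single (Fin.last L) (1 / 2) := by
  ext j
  induction j using Fin.lastCases with
  | last => simp [Qmat, p.isLt.ne', (Fin.castSucc_lt_last p).ne']
  | cast i =>
    rcases eq_or_ne i p with rfl | hip
    · simp [Qmat, halfSign, (Fin.castSucc_lt_last i).ne]
    · simp [Qmat, hip, Fin.val_ne_of_ne hip, i.isLt.ne, (Fin.castSucc_lt_last i).ne]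

theorem Qmat_mul_mul_transpose_apply (M : Matrix (Fin (L + 1)) (Fin (L + 1)) ℝ)
    (p q : Fin L) (s t : Fin 2) :
    (Qmat L * M * (Qmat L)ᵀ) (p, s) (q, t) =
      halfSign s * halfSign t * M p.castSucc q.castSucc
        + halfSign s / 2 * M p.castSucc (Fin.last L) + halfSign t / 2 * M (Fin.last L) q.castSucc
        + M (Fin.last L) (Fin.last L) / 4 := by
  change (Qmat L (p, s) ᵥ* M) ⬝ᵥ Qmat L (q, t) = _
  simp only [Qmat_row, add_vecMul, single_vecMul, dotProduct_add, dotProduct_single, row,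
    Pi.add_apply, Pi.smul_apply, smul_eq_mul]
  ring

theorem mu1_eq (p : Fin L) (s : Fin 2) : mu1 ρ p s = 1 / 2 + halfSign s * (1 - 2 * ρ p) := by
  fin_cases s <;> simp [mu1, halfSign] <;> ring

theorem Mbar_apply (p q : Fin L) (s t : Fin 2) :
    Mbar ρ (p, s) (q, t) = mu1 ρ p s * mu1 ρ q t +
      if p = q then halfSign s * halfSign t * (1 - (1 - 2 * ρ p) ^ 2) else 0 := by
  by_cases hpq : p = q
  · subst hpq
    fin_cases s <;> fin_cases t <;> simp [Mbar, mu1, halfSign] <;> ring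
  · simp [Mbar, hpq]

@[simp] theorem uvec_castSucc (p : Fin L) : uvec ρ p.castSucc = 1 - 2 * ρ p := by
  simp [uvec]

@[simp] theorem uvec_last : uvec ρ (Fin.last L) = 1 := by
  simp [uvec]

@[simp] theorem dvec_castSucc (p : Fin L) : dvec ρ p.castSucc = 1 - (1 - 2 * ρ p) ^ 2 := by
  simp [dvec]

@[simp] theorem dvec_last : dvec ρ (Fin.last L) = 0 := by
  simp [dvec]

theorem Mtilde_eq_vecMulVec_add_diagonal :
    Mtilde ρ = vecMulVec (uvec ρ) (uvec ρ) + diagonal (dvec ρ) :=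
  rfl

theorem Qmat_mul_Mtilde_mul_transpose : Qmat L * Mtilde ρ * (Qmat L)ᵀ = Mbar ρ := by
  ext ⟨p, s⟩ ⟨q, t⟩
  rw [Qmat_mul_mul_transpose_apply, Mbar_apply, mu1_eq, mu1_eq, Mtilde_eq_vecMulVec_add_diagonal]
  simp only [Matrix.add_apply, vecMulVec_apply, diagonal_apply, uvec_castSucc, uvec_last,
    dvec_castSucc, dvec_last, Fin.castSucc_inj, (Fin.castSucc_lt_last _).ne,
    (Fin.castSucc_lt_last _).ne', ↓reduceIte]
  split_ifs with hpq
  · subst hpq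
    ring
  · ring

theorem Mtilde_posDef (hρ : ∀ p, 0 < ρ p ∧ ρ p < 1) : (Mtilde ρ).PosDef := by
  rw [Mtilde_eq_vecMulVec_add_diagonal]
  refine posDef_vecMulVec_add_diagonal (Fin.last L) (by simp) (by simp) fun i hi => ?_
  obtain ⟨p, rfl⟩ := Fin.exists_castSucc_eq.2 hi
  rw [dvec_castSucc]
  nlinarith [hρ p]

end

theorem product_marginal_factorization_general (L : ℕ) (ρ : Fin L → ℝ) :
    Mbar ρ = Qmat L * Mtilde ρ * (Qmat L)ᵀ ∧
    ((∀ p, 0 < ρ p ∧ ρ p < 1) → (Mtilde ρ).PosDef) :=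
  ⟨(Qmat_mul_Mtilde_mul_transpose ρ).symm, Mtilde_posDef ρ⟩

/-- Factorization and definiteness of the product-marginal matrix:
`M̄ = Q M̃ Qᵀ`, and if `0 < ρ_p < 1` for all `p` then `M̃` is positive definite. -/
theorem product_marginal_factorization (L : ℕ) (hL : 2 ≤ L) (ρ : Fin L → ℝ)
    (hρ : ∀ p, 0 ≤ ρ p ∧ ρ p ≤ 1) :
    Mbar ρ = Qmat L * Mtilde ρ * (Qmat L)ᵀ ∧
    ((∀ p, 0 < ρ p ∧ ρ p < 1) → (Mtilde ρ).PosDef) :=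
  product_marginal_factorization_general L ρ
end
end
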